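/- arXiv:0907.0302 — 7 statements merged into one kernel-verified Lean document; each statement's English description precedes it below -/
import Mathlib

section
/- Let δ ⊆ ℕ^n be a finite standard set with more than one element, and let α ∈ ℬ(δ) \ 𝒞(δ) be a border element that is not a corner. Then there exists a standard basis vector ν = e_i such that α - ν ∈ ℬ(δ). -/
/-- A standard set in ℕ^n: its complement is closed under addition of elements of ℕ^n. -/
def StdSet {n : ℕ} (δ : Set (Fin n → ℕ)) : Prop :=
  ∀ α ∉ δ, ∀ γ : Fin n → ℕ, α + γ ∉ δ

/-- A corner of δ: an element outside δ all of whose predecessors (when they exist in ℕ^n)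
lie in δ. -/
def StdCorner {n : ℕ} (δ : Set (Fin n → ℕ)) (α : Fin n → ℕ) : Prop :=
  α ∉ δ ∧ ∀ (i : Fin n) (β : Fin n → ℕ), β + Pi.single i 1 = α → β ∈ δ

/-- The border of δ: elements outside δ of the form β + e_i with β ∈ δ. -/
def StdBorder {n : ℕ} (δ : Set (Fin n → ℕ)) : Set (Fin n → ℕ) :=
  {α | α ∉ δ ∧ ∃ (i : Fin n), ∃ β ∈ δ, β + Pi.single i 1 = α}

/-!
If α = β' + e_j with β' ∈ δ is not a corner, some predecessor β = α - e_i lies outside δ, and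
necessarily i ≠ j. Then γ = α - e_i - e_j exists in ℕ^n and γ + e_i = β' ∈ δ, so γ ∈ δ because
the complement of δ is closed upwards. Hence β = γ + e_j is a border element.
-/

theorem StdSet.mem_of_add_mem {n : ℕ} {δ : Set (Fin n → ℕ)} (h : StdSet δ)
    {β γ : Fin n → ℕ} (hβγ : β + γ ∈ δ) : β ∈ δ :=
  not_not.mp fun hβ ↦ h β hβ γ hβγ

theorem exists_pred_notMem_of_not_stdCorner {n : ℕ} {δ : Set (Fin n → ℕ)} {α : Fin n → ℕ}
    (hα : α ∉ δ) (hnc : ¬ StdCorner δ α) :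
    ∃ i : Fin n, ∃ β ∉ δ, β + Pi.single i 1 = α := by
  simp only [StdCorner, not_and, not_forall] at hnc
  obtain ⟨i, β, hβα, hβ⟩ := hnc hα
  exact ⟨i, β, hβ, hβα⟩

theorem Pi.exists_add_single_eq_of_add_single_eq_add_single {ι : Type*} [DecidableEq ι]
    {β β' : ι → ℕ} {i j : ι} (hij : i ≠ j) (h : β + Pi.single i 1 = β' + Pi.single j 1) :
    ∃ γ : ι → ℕ, γ + Pi.single j 1 = β ∧ γ + Pi.single i 1 = β' := by
  have hle : Pi.single i 1 ≤ β' := by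
    intro k
    rcases eq_or_ne k i with rfl | hki
    · have hk := congrFun h k
      simp only [Pi.add_apply, Pi.single_eq_same, Pi.single_eq_of_ne hij] at hk ⊢
      omega
    · simp [hki]
  refine ⟨β' - Pi.single i 1, add_right_cancel (b := Pi.single i 1) ?_, tsub_add_cancel_of_le hle⟩
  rw [add_right_comm, tsub_add_cancel_of_le hle, h]

theorem stmt4_general {n : ℕ} (δ : Set (Fin n → ℕ)) (h : StdSet δ) (α : Fin n → ℕ)
    (hα : α ∈ StdBorder δ) (hnc : ¬ StdCorner δ α) :
    ∃ i : Fin n, ∃ β ∈ StdBorder δ, β + Pi.single i 1 = α := by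
  obtain ⟨hαδ, j, β', hβ'δ, hβ'α⟩ := hα
  obtain ⟨i, β, hβδ, hβα⟩ := exists_pred_notMem_of_not_stdCorner hαδ hnc
  have hpred : β + Pi.single i 1 = β' + Pi.single j 1 := hβα.trans hβ'α.symm
  have hij : i ≠ j := by
    rintro rfl
    exact hβδ (add_left_injective _ hpred ▸ hβ'δ)
  obtain ⟨γ, hγβ, hγβ'⟩ := Pi.exists_add_single_eq_of_add_single_eq_add_single hij hpred
  have hγδ : γ ∈ δ := h.mem_of_add_mem (hγβ' ▸ hβ'δ)
  exact ⟨i, β, ⟨hβδ, j, γ, hγδ, hγβ⟩, hβα⟩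

theorem stmt4 {n : ℕ} (δ : Set (Fin n → ℕ)) (h : StdSet δ) (hfin : δ.Finite)
    (hnt : δ.Nontrivial) (α : Fin n → ℕ)
    (hα : α ∈ StdBorder δ) (hnc : ¬ StdCorner δ α) :
    ∃ i : Fin n, ∃ β ∈ StdBorder δ, β + Pi.single i 1 = α :=
  stmt4_general δ h α hα hnc
end

section
/- Let B be a commutative ring, δ a finite standard set, and φ : B[x] → ⊕_{β∈δ} B·x^β a B-module homomorphism with φ(x^β) = x^β for all β ∈ δ. Suppose the multiplicativity condition φ(x^{α+e_i}) = φ(φ(x^α)·x^{e_i}) holds for all α ∈ ℕ^n and all i (where the right side is computed by B-linearity using φ(x^γ) for γ ∈ δ). Then ker φ is an ideal of B[x], and the induced map B[x]/ker φ → ⊕_{β∈δ} B·x^β is an isomorphism of B-modules. -/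
/-! With `s := monomialCombination δ`, `s v = ∑ γ ∈ δ, v γ • x^γ`, the multiplicativity condition says
`φ (x_i * h) = φ (x_i * s (φ h))` for monomials `h`, hence by linearity for all `h`. So `ker φ`
is stable under multiplication by every variable, i.e. it is an ideal. Since `φ ∘ s = id`, `φ` is
surjective and the first isomorphism theorem gives `B[x] ⧸ ker φ ≃ B^δ`. -/

open MvPolynomial

theorem MvPolynomial.mul_mem_of_forall_X_mul_mem {R σ : Type*} [CommSemiring R]
    (N : Submodule R (MvPolynomial σ R)) (hX : ∀ i, ∀ f ∈ N, X i * f ∈ N)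
    (g : MvPolynomial σ R) : ∀ f ∈ N, g * f ∈ N := by
  induction g using MvPolynomial.induction_on with
  | C a => exact fun f hf => C_mul' (a := a) (p := f) ▸ N.smul_mem a hf
  | add p q hp hq => exact fun f hf => (add_mul p q f).symm ▸ N.add_mem (hp f hf) (hq f hf)
  | mul_X p i hp => exact fun f hf => (mul_assoc p (X i) f).symm ▸ hp _ (hX i f hf)

section NormalForm

variable {B σ : Type*} [CommRing B] (δ : Finset (σ →₀ ℕ))

noncomputable def monomialCombination : (↥δ → B) →ₗ[B] MvPolynomial σ B :=
  Fintype.linearCombination B fun γ : ↥δ => monomial (γ : σ →₀ ℕ) 1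

variable {δ} (φ : MvPolynomial σ B →ₗ[B] (↥δ → B))

theorem apply_monomialCombination [DecidableEq σ]
    (hid : ∀ β : ↥δ, φ (monomial (β : σ →₀ ℕ) 1) = fun γ => if γ = β then 1 else 0)
    (v : ↥δ → B) : φ (monomialCombination δ v) = v := by
  funext β
  simp [monomialCombination, Fintype.linearCombination_apply, hid]

theorem apply_X_mul_eq_apply_X_mul_monomialCombination
    (hmul : ∀ (α : σ →₀ ℕ) (i : σ), φ (monomial (α + Finsupp.single i 1) 1) =
      ∑ γ : ↥δ, φ (monomial α 1) γ • φ (monomial ((γ : σ →₀ ℕ) + Finsupp.single i 1) 1))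
    (i : σ) (h : MvPolynomial σ B) :
    φ (X i * h) = φ (X i * monomialCombination δ (φ h)) := by
  suffices φ ∘ₗ LinearMap.mulLeft B (X i) =
      φ ∘ₗ LinearMap.mulLeft B (X i) ∘ₗ monomialCombination δ ∘ₗ φ from
    LinearMap.congr_fun this h
  refine MvPolynomial.linearMap_ext fun α => LinearMap.ext_ring ?_
  have hXα : (X i * monomial α 1 : MvPolynomial σ B) = monomial (α + Finsupp.single i 1) 1 := by
    rw [X, monomial_mul, one_mul, add_comm]
  simp only [LinearMap.comp_apply, LinearMap.mulLeft_apply]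
  rw [hXα, hmul, monomialCombination, Fintype.linearCombination_apply, Finset.mul_sum, map_sum]
  refine Finset.sum_congr rfl fun γ _ => ?_
  rw [mul_smul_comm, map_smul, X, monomial_mul, one_mul, add_comm]

theorem X_mul_mem_ker
    (hmul : ∀ (α : σ →₀ ℕ) (i : σ), φ (monomial (α + Finsupp.single i 1) 1) =
      ∑ γ : ↥δ, φ (monomial α 1) γ • φ (monomial ((γ : σ →₀ ℕ) + Finsupp.single i 1) 1))
    (i : σ) {f : MvPolynomial σ B} (hf : f ∈ LinearMap.ker φ) : X i * f ∈ LinearMap.ker φ := by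
  rw [LinearMap.mem_ker] at hf ⊢
  rw [apply_X_mul_eq_apply_X_mul_monomialCombination φ hmul, hf, map_zero, mul_zero, map_zero]

end NormalForm

theorem stmt11_general {B : Type*} [CommRing B] {n : ℕ}
    (δ : Finset (Fin n →₀ ℕ))
    (φ : MvPolynomial (Fin n) B →ₗ[B] (↥δ → B))
    (hid : ∀ β : ↥δ, φ (MvPolynomial.monomial (β : Fin n →₀ ℕ) 1) =
      fun γ => if γ = β then 1 else 0)
    (hmul : ∀ (α : Fin n →₀ ℕ) (i : Fin n),
      φ (MvPolynomial.monomial (α + Finsupp.single i 1) 1) =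
        ∑ γ : ↥δ, φ (MvPolynomial.monomial α 1) γ •
          φ (MvPolynomial.monomial ((γ : Fin n →₀ ℕ) + Finsupp.single i 1) 1)) :
    (∀ f ∈ LinearMap.ker φ, ∀ g : MvPolynomial (Fin n) B, g * f ∈ LinearMap.ker φ) ∧
    ∃ e : (MvPolynomial (Fin n) B ⧸ LinearMap.ker φ) ≃ₗ[B] (↥δ → B),
      ∀ f : MvPolynomial (Fin n) B, e (Submodule.Quotient.mk f) = φ f := by
  have hsurj : Function.Surjective φ :=
    Function.LeftInverse.surjective (apply_monomialCombination φ hid)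
  exact ⟨fun f hf g => mul_mem_of_forall_X_mul_mem _ (fun i _ => X_mul_mem_ker φ hmul i) g f hf,
    φ.quotKerEquivOfSurjective hsurj, fun _ => rfl⟩

theorem stmt11 {B : Type*} [CommRing B] {n : ℕ}
    (δ : Finset (Fin n →₀ ℕ))
    (hstd : ∀ α ∉ δ, ∀ γ : Fin n →₀ ℕ, α + γ ∉ δ)
    (φ : MvPolynomial (Fin n) B →ₗ[B] (↥δ → B))
    (hid : ∀ β : ↥δ, φ (MvPolynomial.monomial (β : Fin n →₀ ℕ) 1) =
      fun γ => if γ = β then 1 else 0)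
    (hmul : ∀ (α : Fin n →₀ ℕ) (i : Fin n),
      φ (MvPolynomial.monomial (α + Finsupp.single i 1) 1) =
        ∑ γ : ↥δ, φ (MvPolynomial.monomial α 1) γ •
          φ (MvPolynomial.monomial ((γ : Fin n →₀ ℕ) + Finsupp.single i 1) 1)) :
    (∀ f ∈ LinearMap.ker φ, ∀ g : MvPolynomial (Fin n) B, g * f ∈ LinearMap.ker φ) ∧
    ∃ e : (MvPolynomial (Fin n) B ⧸ LinearMap.ker φ) ≃ₗ[B] (↥δ → B),
      ∀ f : MvPolynomial (Fin n) B, e (Submodule.Quotient.mk f) = φ f :=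
  stmt11_general δ φ hid hmul
end

section
/- Let B be a commutative ring, δ a finite standard set, and (a_{α,β})_{α∈ℕ^n, β∈δ} a matrix over B with a_{α,β} = δ_{αβ} for α ∈ δ. Then the B-module homomorphism φ : B[x] → Bx^δ, φ(x^α) = Σ_β a_{α,β} x^β, has kernel an ideal of B[x] if and only if the structural equations a_{e_i+α,β} = Σ_{γ∈δ} a_{α,γ} a_{e_i+γ,β} hold for all α ∈ ℕ^n, all i ∈ {1,…,n}, and all β ∈ δ. -/
/-!
The elements `x^α - ∑_{γ ∈ δ} a_{α,γ} x^γ` lie in the kernel of `φ`, so if the kernel is an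
ideal, multiplying them by `x_i` yields the structural equations. Conversely, the structural
equations say that `φ (x_i * p) = φ p ᵥ* M_i` for the matrix `M_i γ β = a_{γ+e_i, β}`; this is
checked on monomials, and it makes the kernel stable under every `x_i`, hence an ideal.
-/

open MvPolynomial Matrix

namespace MvPolynomial

variable {σ R : Type*}

theorem X_mul_monomial_one [CommSemiring R] (i : σ) (α : σ →₀ ℕ) :
    X i * monomial α (1 : R) = monomial (α + Finsupp.single i 1) 1 := by
  rw [monomial_add_single, pow_one, mul_comm]

theorem mul_mem_of_forall_X_mul_mem_s12 [CommSemiring R] {K : Submodule R (MvPolynomial σ R)}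
    (hK : ∀ i, ∀ f ∈ K, X i * f ∈ K) (g : MvPolynomial σ R) {f : MvPolynomial σ R}
    (hf : f ∈ K) : g * f ∈ K := by
  induction g using MvPolynomial.induction_on generalizing f with
  | C c => simpa only [C_mul'] using K.smul_mem c hf
  | add p q hp hq => simpa only [add_mul] using add_mem (hp hf) (hq hf)
  | mul_X p i hp => simpa only [mul_assoc] using hp (hK i f hf)

theorem map_X_mul_of_map_monomial [CommSemiring R] {M : Type*} [AddCommMonoid M] [Module R M]
    (φ : MvPolynomial σ R →ₗ[R] M) (T : M →ₗ[R] M) (i : σ)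
    (h : ∀ α, φ (monomial (α + Finsupp.single i 1) 1) = T (φ (monomial α 1)))
    (p : MvPolynomial σ R) : φ (X i * p) = T (φ p) := by
  suffices φ ∘ₗ LinearMap.mulLeft R (X i) = T ∘ₗ φ from LinearMap.congr_fun this p
  refine linearMap_ext fun α => LinearMap.ext_ring ?_
  simp only [LinearMap.comp_apply, LinearMap.mulLeft_apply]
  rw [X_mul_monomial_one, h]

variable [CommRing R] {δ : Finset (σ →₀ ℕ)} {a : (σ →₀ ℕ) → δ → R}
  {φ : MvPolynomial σ R →ₗ[R] (δ → R)} (hφ : ∀ α, φ (monomial α 1) = a α)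
include hφ

theorem map_sum_smul_monomial [DecidableEq σ] (haδ : ∀ α β : δ, a α β = if β = α then 1 else 0)
    (v : δ → R) :
    φ (∑ γ : δ, v γ • monomial (γ : σ →₀ ℕ) 1) = v := by
  ext β
  simp [hφ, haδ]

theorem map_X_mul_monomial_sub_sum (i : σ) (α : σ →₀ ℕ) (β : δ) :
    φ (X i * (monomial α 1 - ∑ γ : δ, a α γ • monomial (γ : σ →₀ ℕ) 1)) β =
      a (α + Finsupp.single i 1) β - ∑ γ : δ, a α γ * a ((γ : σ →₀ ℕ) + Finsupp.single i 1) β := by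
  simp [mul_sub, Finset.mul_sum, X_mul_monomial_one, hφ]

theorem map_X_mul_eq_vecMul
    (heq : ∀ α i (β : δ),
      a (α + Finsupp.single i 1) β = ∑ γ : δ, a α γ * a ((γ : σ →₀ ℕ) + Finsupp.single i 1) β)
    (i : σ) (p : MvPolynomial σ R) :
    φ (X i * p) = φ p ᵥ* Matrix.of fun γ β : δ => a ((γ : σ →₀ ℕ) + Finsupp.single i 1) β := by
  refine map_X_mul_of_map_monomial φ (vecMulLinear _) i (fun α => ?_) p
  ext β
  simp [hφ, heq α i β, vecMul, dotProduct]

end MvPolynomial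

theorem stmt12_general {B : Type*} [CommRing B] {n : ℕ}
    (δ : Finset (Fin n →₀ ℕ))
    (a : (Fin n →₀ ℕ) → ↥δ → B)
    (haδ : ∀ (α : ↥δ) (β : ↥δ), a (α : Fin n →₀ ℕ) β = if β = α then 1 else 0)
    (φ : MvPolynomial (Fin n) B →ₗ[B] (↥δ → B))
    (hφ : ∀ α : Fin n →₀ ℕ, φ (MvPolynomial.monomial α 1) = a α) :
    (∀ f ∈ LinearMap.ker φ, ∀ g : MvPolynomial (Fin n) B, g * f ∈ LinearMap.ker φ) ↔
    ∀ (α : Fin n →₀ ℕ) (i : Fin n) (β : ↥δ),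
      a (α + Finsupp.single i 1) β =
        ∑ γ : ↥δ, a α γ * a ((γ : Fin n →₀ ℕ) + Finsupp.single i 1) β := by
  constructor
  · intro hker α i β
    have hr : monomial α 1 - ∑ γ : δ, a α γ • monomial (γ : Fin n →₀ ℕ) 1 ∈ LinearMap.ker φ := by
      rw [LinearMap.mem_ker, map_sub, map_sum_smul_monomial hφ haδ, hφ, sub_self]
    have := congrFun (hker _ hr (X i)) β
    rwa [map_X_mul_monomial_sub_sum hφ, Pi.zero_apply, sub_eq_zero] at this
  · intro heq f hf g
    refine mul_mem_of_forall_X_mul_mem_s12 (fun i q hq => ?_) g hf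
    rw [LinearMap.mem_ker, map_X_mul_eq_vecMul hφ heq, LinearMap.mem_ker.mp hq, zero_vecMul]

theorem stmt12 {B : Type*} [CommRing B] {n : ℕ}
    (δ : Finset (Fin n →₀ ℕ))
    (hstd : ∀ α ∉ δ, ∀ γ : Fin n →₀ ℕ, α + γ ∉ δ)
    (a : (Fin n →₀ ℕ) → ↥δ → B)
    (haδ : ∀ (α : ↥δ) (β : ↥δ), a (α : Fin n →₀ ℕ) β = if β = α then 1 else 0)
    (φ : MvPolynomial (Fin n) B →ₗ[B] (↥δ → B))
    (hφ : ∀ α : Fin n →₀ ℕ, φ (MvPolynomial.monomial α 1) = a α) :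
    (∀ f ∈ LinearMap.ker φ, ∀ g : MvPolynomial (Fin n) B, g * f ∈ LinearMap.ker φ) ↔
    ∀ (α : Fin n →₀ ℕ) (i : Fin n) (β : ↥δ),
      a (α + Finsupp.single i 1) β =
        ∑ γ : ↥δ, a α γ * a ((γ : Fin n →₀ ℕ) + Finsupp.single i 1) β :=
  stmt12_general δ a haδ φ hφ
end

section
/- Assume there exists a linear map ℓ : ℤ^n → ℤ with ℓ(e_i) > 0 for all i and ℓ(α) > ℓ(β) for all α ∈ ℕ^n \ δ and β ∈ δ, where δ is a finite standard set. Define the order ≺_ℓ by α ≺_ℓ β iff ℓ(α) < ℓ(β), or ℓ(α) = ℓ(β) and α ≺ β for a fixed monomial order ≺. Then ≺_ℓ is a monomial order, and with respect to ≺_ℓ every α ∈ ℕ^n \ δ satisfies β ≺_ℓ α for all β ∈ δ. -/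
/-- A monomial order on ℕ^n: a total, transitive, irreflexive order compatible with
addition in which 0 is minimal. -/
structure MonOrd (n : ℕ) where
  lt : (Fin n → ℕ) → (Fin n → ℕ) → Prop
  lt_trans : ∀ {a b c}, lt a b → lt b c → lt a c
  lt_irrefl : ∀ a, ¬ lt a a
  lt_total : ∀ a b, lt a b ∨ a = b ∨ lt b a
  add_right : ∀ {a b} (c), lt a b → lt (a + c) (b + c)
  zero_min : ∀ a, a ≠ 0 → lt 0 a

/-!
A weight `ℓ` that is positive on the unit vectors is positive on every nonzero exponent, which is
exactly what makes comparing by `ℓ` first and breaking ties with `≺` a monomial order. Since this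
order compares by `ℓ` first, the separation of `ℕ^n \ δ` from `δ` is inherited from `ℓ`.
-/

theorem AddMonoidHom.apply_pos_of_single_pos {ι M : Type*} [Fintype ι] [DecidableEq ι]
    [AddCommMonoid M] [PartialOrder M] [IsOrderedCancelAddMonoid M] (w : (ι → ℕ) →+ M)
    (hpos : ∀ i, 0 < w (Pi.single i 1)) {a : ι → ℕ} (ha : a ≠ 0) : 0 < w a := by
  have hsum : w a = ∑ i, a i • w (Pi.single i 1) := by
    conv_lhs => rw [← Finset.univ_sum_single a]
    simp only [map_sum, ← map_nsmul, ← Pi.single_smul, smul_eq_mul, mul_one]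
  obtain ⟨i, hi⟩ := Function.ne_iff.mp ha
  rw [hsum]
  exact Finset.sum_pos' (fun j _ => nsmul_nonneg (hpos j).le _)
    ⟨i, Finset.mem_univ i, nsmul_pos (hpos i) hi⟩

theorem natCast_comp_single_one {ι : Type*} [DecidableEq ι] (i : ι) :
    (fun k => ((Pi.single i 1 : ι → ℕ) k : ℤ)) = Pi.single i 1 := by
  ext k; simp [Pi.single_apply]

namespace MonOrd

variable {n : ℕ} {M : Type*} [AddCommMonoid M] [LinearOrder M] [IsOrderedCancelAddMonoid M]

def refineByWeight (mo : MonOrd n) (w : (Fin n → ℕ) →+ M) (hw : ∀ a, a ≠ 0 → 0 < w a) :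
    MonOrd n where
  lt a b := w a < w b ∨ (w a = w b ∧ mo.lt a b)
  lt_trans := by
    rintro a b c (hab | ⟨hab, hab'⟩) (hbc | ⟨hbc, hbc'⟩)
    · exact .inl (hab.trans hbc)
    · exact .inl (hbc ▸ hab)
    · exact .inl (hab ▸ hbc)
    · exact .inr ⟨hab.trans hbc, mo.lt_trans hab' hbc'⟩
  lt_irrefl a := by
    rintro (h | ⟨_, h⟩)
    exacts [h.false, mo.lt_irrefl a h]
  lt_total a b := by
    rcases lt_trichotomy (w a) (w b) with h | h | h
    · exact .inl (.inl h)
    · rcases mo.lt_total a b with h' | h' | h'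
      · exact .inl (.inr ⟨h, h'⟩)
      · exact .inr (.inl h')
      · exact .inr (.inr (.inr ⟨h.symm, h'⟩))
    · exact .inr (.inr (.inl h))
  add_right c := by
    rintro (h | ⟨h, h'⟩)
    · exact .inl (by simpa only [map_add] using add_lt_add_left h (w c))
    · exact .inr ⟨by rw [map_add, map_add, h], mo.add_right c h'⟩
  zero_min a ha := .inl (by simpa only [map_zero] using hw a ha)

end MonOrd

theorem stmt15_general {n : ℕ} (mo : MonOrd n) (δ : Set (Fin n → ℕ))
    (l : (Fin n → ℤ) →ₗ[ℤ] ℤ)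
    (hpos : ∀ i : Fin n, 0 < l (Pi.single i 1))
    (hsep : ∀ α ∉ δ, ∀ β ∈ δ,
      l (fun k => ((β : Fin n → ℕ) k : ℤ)) < l (fun k => ((α : Fin n → ℕ) k : ℤ))) :
    ∃ mo' : MonOrd n,
      (∀ a b : Fin n → ℕ, mo'.lt a b ↔
        (l (fun k => (a k : ℤ)) < l (fun k => (b k : ℤ)) ∨
          (l (fun k => (a k : ℤ)) = l (fun k => (b k : ℤ)) ∧ mo.lt a b))) ∧
      ∀ α ∉ δ, ∀ β ∈ δ, mo'.lt β α := by
  let w : (Fin n → ℕ) →+ ℤ := l.toAddMonoidHom.comp ((Nat.castAddMonoidHom ℤ).compLeft (Fin n))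
  have hw : ∀ a, a ≠ 0 → 0 < w a :=
    fun _ => w.apply_pos_of_single_pos fun i => by
      change 0 < l (fun k => ((Pi.single i 1 : Fin n → ℕ) k : ℤ))
      rw [natCast_comp_single_one]; exact hpos i
  exact ⟨mo.refineByWeight w hw, fun _ _ => Iff.rfl, fun α hα β hβ => .inl (hsep α hα β hβ)⟩

theorem stmt15 {n : ℕ} (mo : MonOrd n) (δ : Set (Fin n → ℕ))
    (hstd : StdSet δ) (hfin : δ.Finite)
    (l : (Fin n → ℤ) →ₗ[ℤ] ℤ)
    (hpos : ∀ i : Fin n, 0 < l (Pi.single i 1))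
    (hsep : ∀ α ∉ δ, ∀ β ∈ δ,
      l (fun k => ((β : Fin n → ℕ) k : ℤ)) < l (fun k => ((α : Fin n → ℕ) k : ℤ))) :
    ∃ mo' : MonOrd n,
      (∀ a b : Fin n → ℕ, mo'.lt a b ↔
        (l (fun k => (a k : ℤ)) < l (fun k => (b k : ℤ)) ∨
          (l (fun k => (a k : ℤ)) = l (fun k => (b k : ℤ)) ∧ mo.lt a b))) ∧
      ∀ α ∉ δ, ∀ β ∈ δ, mo'.lt β α :=
  stmt15_general mo δ l hpos hsep
end

section
/- Let δ and ε be finite standard sets of the same size r, B a commutative ring, and I ⊆ B[x] an ideal such that both (x^β + I)_{β∈δ} and (x^ξ + I)_{ξ∈ε} are B-bases of B[x]/I. For α ∈ ε \ δ write x^α + Σ_{γ∈δ} d_{α,γ} x^γ ∈ I. Then the square matrix (d_{α,β})_{α ∈ ε\δ, β ∈ δ\ε} is invertible over B. -/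
/-! Up to sign, `(d_{α,β})` is the `(ε \ δ) × (δ \ ε)` block of the transition matrix between the
two bases. They share the vectors indexed by `δ ∩ ε`, so in the identity
`∑_{γ ∈ δ} c.repr (b γ) α' * b.repr (c α) γ = [α = α']` every term with `γ ∈ ε` vanishes (`γ ∈ δ`
but `α' ∉ δ`), leaving the product of the two off-diagonal blocks; by symmetry they are mutually
inverse. -/

open Finset

namespace Module.Basis

variable {σ R V : Type*} {δ ε : Finset σ}

theorem repr_eq_neg_of_add_sum_smul_eq_zero [Ring R] [AddCommGroup V] [Module R V] {v : σ → V}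
    (b : Basis δ R V) (hb : ∀ i, b i = v i) {u : V} {a : σ → R}
    (h : u + ∑ γ ∈ δ, a γ • v γ = 0) (i : δ) : b.repr u i = -a i := by
  have hu : u = ∑ γ : δ, (-a γ) • b γ := by
    simp only [neg_smul, sum_neg_distrib, hb, sum_coe_sort δ fun γ => a γ • v γ]
    exact eq_neg_of_add_eq_zero_left h
  rw [hu, b.repr_sum_self]

section CommSemiring

variable [DecidableEq σ] [CommSemiring R] [AddCommMonoid V] [Module R V]

noncomputable def exchangeMatrix (b : Basis δ R V) (c : Basis ε R V) : Matrix ↥(ε \ δ) ↥(δ \ ε) R :=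
  .of fun p q => b.repr (c ⟨p, (mem_sdiff.1 p.2).1⟩) ⟨q, (mem_sdiff.1 q.2).1⟩

theorem exchangeMatrix_mul_exchangeMatrix {v : σ → V}
    (b : Basis δ R V) (c : Basis ε R V) (hb : ∀ i, b i = v i) (hc : ∀ j, c j = v j) :
    exchangeMatrix b c * exchangeMatrix c b = 1 := by
  ext p p'
  obtain ⟨hpε, -⟩ := mem_sdiff.1 p.2
  obtain ⟨hp'ε, hp'δ⟩ := mem_sdiff.1 p'.2
  have hfull := c.sum_repr_mul_repr b (c ⟨p, hpε⟩) ⟨p', hp'ε⟩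
  have hcommon : ∀ i : δ, (i : σ) ∈ ε → c.repr (b i) ⟨p', hp'ε⟩ = 0 := fun i hi => by
    rw [hb, ← hc ⟨i, hi⟩, c.repr_self_apply, if_neg]
    exact fun h => hp'δ (congrArg Subtype.val h ▸ i.2)
  have hrestrict := Fintype.sum_of_injective
    (fun q : ↥(δ \ ε) => (⟨q, (mem_sdiff.1 q.2).1⟩ : δ)) (fun q q' h => by simpa using h)
    (fun q => c.repr (b ⟨q, (mem_sdiff.1 q.2).1⟩) ⟨p', hp'ε⟩ *
      b.repr (c ⟨p, hpε⟩) ⟨q, (mem_sdiff.1 q.2).1⟩)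
    (fun i => c.repr (b i) ⟨p', hp'ε⟩ * b.repr (c ⟨p, hpε⟩) i)
    (fun i hi => by
      rw [hcommon i ?_, zero_mul]
      by_contra hiε
      exact hi ⟨⟨i, mem_sdiff.2 ⟨i.2, hiε⟩⟩, rfl⟩)
    (fun _ => rfl)
  rw [Matrix.mul_apply, Matrix.one_apply]
  simp only [exchangeMatrix, Matrix.of_apply]
  simp_rw [mul_comm (b.repr _ _)]
  rw [hrestrict, hfull, c.repr_self_apply]
  exact if_congr (by rw [Subtype.mk.injEq, Subtype.ext_iff]) rfl rfl

end CommSemiring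

end Module.Basis

open MvPolynomial

theorem stmt17_general {B : Type*} [CommRing B] {n : ℕ}
    (δ ε : Finset (Fin n →₀ ℕ))
    (I : Ideal (MvPolynomial (Fin n) B))
    (hbasisδ : ∃ b : Module.Basis ↥δ B (MvPolynomial (Fin n) B ⧸ I),
      ∀ β : ↥δ, b β = Ideal.Quotient.mk I (MvPolynomial.monomial (β : Fin n →₀ ℕ) 1))
    (hbasisε : ∃ b : Module.Basis ↥ε B (MvPolynomial (Fin n) B ⧸ I),
      ∀ ξ : ↥ε, b ξ = Ideal.Quotient.mk I (MvPolynomial.monomial (ξ : Fin n →₀ ℕ) 1))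
    (d : (Fin n →₀ ℕ) → (Fin n →₀ ℕ) → B)
    (hd : ∀ α ∈ ε, α ∉ δ →
      (MvPolynomial.monomial α (1 : B) + ∑ γ ∈ δ, MvPolynomial.monomial γ (d α γ)) ∈ I)
    (M : Matrix ↥(ε \ δ) ↥(δ \ ε) B)
    (hM : ∀ (p : ↥(ε \ δ)) (q : ↥(δ \ ε)), M p q = d (p : Fin n →₀ ℕ) (q : Fin n →₀ ℕ)) :
    ∃ N : Matrix ↥(δ \ ε) ↥(ε \ δ) B, M * N = 1 ∧ N * M = 1 := by
  let v α := Ideal.Quotient.mk I (monomial α (1 : B))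
  obtain ⟨b, hb⟩ := hbasisδ
  obtain ⟨c, hc⟩ := hbasisε
  have hmk : ∀ γ a, Ideal.Quotient.mk I (monomial γ a) = a • Ideal.Quotient.mk I (monomial γ 1) :=
    fun γ a => by
      rw [← Ideal.Quotient.mkₐ_eq_mk B, ← map_smul, smul_monomial, smul_eq_mul, mul_one]
  have hM' : M = -b.exchangeMatrix c := by
    ext p q
    obtain ⟨hpε, hpδ⟩ := mem_sdiff.1 p.2
    have hrel := Ideal.Quotient.eq_zero_iff_mem.2 (hd p hpε hpδ)
    rw [map_add, map_sum] at hrel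
    simp only [hmk _ (d _ _)] at hrel
    rw [hM, Matrix.neg_apply, Module.Basis.exchangeMatrix, Matrix.of_apply, hc,
      b.repr_eq_neg_of_add_sum_smul_eq_zero hb hrel, neg_neg]
  refine ⟨-c.exchangeMatrix b, ?_, ?_⟩ <;> rw [hM', Matrix.neg_mul, Matrix.mul_neg, neg_neg]
  · exact b.exchangeMatrix_mul_exchangeMatrix (v := v) c hb hc
  · exact c.exchangeMatrix_mul_exchangeMatrix (v := v) b hc hb

theorem stmt17 {B : Type*} [CommRing B] {n r : ℕ}
    (δ ε : Finset (Fin n →₀ ℕ))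
    (hδstd : ∀ α ∉ δ, ∀ γ : Fin n →₀ ℕ, α + γ ∉ δ)
    (hεstd : ∀ α ∉ ε, ∀ γ : Fin n →₀ ℕ, α + γ ∉ ε)
    (hδcard : δ.card = r) (hεcard : ε.card = r)
    (I : Ideal (MvPolynomial (Fin n) B))
    (hbasisδ : ∃ b : Module.Basis ↥δ B (MvPolynomial (Fin n) B ⧸ I),
      ∀ β : ↥δ, b β = Ideal.Quotient.mk I (MvPolynomial.monomial (β : Fin n →₀ ℕ) 1))
    (hbasisε : ∃ b : Module.Basis ↥ε B (MvPolynomial (Fin n) B ⧸ I),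
      ∀ ξ : ↥ε, b ξ = Ideal.Quotient.mk I (MvPolynomial.monomial (ξ : Fin n →₀ ℕ) 1))
    (d : (Fin n →₀ ℕ) → (Fin n →₀ ℕ) → B)
    (hd : ∀ α ∈ ε, α ∉ δ →
      (MvPolynomial.monomial α (1 : B) + ∑ γ ∈ δ, MvPolynomial.monomial γ (d α γ)) ∈ I)
    (M : Matrix ↥(ε \ δ) ↥(δ \ ε) B)
    (hM : ∀ (p : ↥(ε \ δ)) (q : ↥(δ \ ε)), M p q = d (p : Fin n →₀ ℕ) (q : Fin n →₀ ℕ)) :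
    ∃ N : Matrix ↥(δ \ ε) ↥(ε \ δ) B, M * N = 1 ∧ N * M = 1 :=
  stmt17_general δ ε I hbasisδ hbasisε d hd M hM
end

section
/- Let F be a field with at least r elements, δ ⊆ ℕ^n a finite standard set of size r, and choose an injection η : {0,…,r−1} → F, inducing η^n : {0,…,r−1}^n → F^n. Let E = η^n(δ) ⊆ F^n (assuming δ ⊆ {0,…,r−1}^n) and let I ⊆ F[x] be the vanishing ideal of the finite set E. Then the residue classes (x^β + I)_{β∈δ} form an F-basis of F[x]/I; equivalently, the evaluation matrix (p^β)_{p ∈ E, β ∈ δ} is invertible. -/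
/-!
The Newton polynomials `g β = ∏ᵢ ∏_{j < β i} (X i - C (η j))` have all their monomials below `β`,
hence in the lower set `δ`; moreover `g β` vanishes at `η ∘ α` unless `β ≤ α`, and not at `η ∘ β`.
So the matrix `(g β (η ∘ α))` is triangular for a linear extension of the product order, with
nonzero diagonal, and it factors as the monomial evaluation matrix times the coefficient matrix of
the `g β`: the evaluation matrix is invertible. Evaluation at the points of `E` embeds `F[x] ⧸ I`
into `F^δ` and sends the class of `x^β` to the `β`-th column of that matrix; these columns form a
basis, so the classes of the monomials do too.
-/

open Finset

theorem isLowerSet_of_forall_add_notMem {σ : Type*} {δ : Finset (σ →₀ ℕ)}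
    (hδ : ∀ α ∉ δ, ∀ γ : σ →₀ ℕ, α + γ ∉ δ) : IsLowerSet (δ : Set (σ →₀ ℕ)) := by
  intro β q hq hβ
  by_contra hqδ
  exact hδ q hqδ (β - q) (by rwa [add_tsub_cancel_of_le hq])

theorem Matrix.det_eq_prod_diag_of_le_of_ne_zero {m R : Type*} [Fintype m] [DecidableEq m]
    [PartialOrder m] [CommRing R] (M : Matrix m m R) (hM : ∀ i j, M i j ≠ 0 → j ≤ i) :
    M.det = ∏ i, M i i := by
  let : Fintype (LinearExtension m) := ‹Fintype m›
  let : DecidableEq (LinearExtension m) := ‹DecidableEq m›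
  let e : LinearExtension m ≃ m := Equiv.refl m
  rw [← det_submatrix_equiv_self e, det_of_isLowerTriangular]
  · rfl
  · intro i j hij
    by_contra h
    exact (toLinearExtension.monotone (hM _ _ h)).not_gt hij

theorem exists_basis_of_injective_of_comp_eq {ι R V W : Type*} [Ring R] [AddCommGroup V]
    [Module R V] [AddCommGroup W] [Module R W] {Φ : V →ₗ[R] W} (hΦ : Function.Injective Φ)
    (c : Module.Basis ι R W) {v : ι → V} (hv : ∀ i, Φ (v i) = c i) :
    ∃ b : Module.Basis ι R V, ∀ i, b i = v i := by
  have hsurj : Function.Surjective Φ := by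
    rw [← LinearMap.range_eq_top, eq_top_iff, ← c.span_eq, Submodule.span_le]
    rintro _ ⟨i, rfl⟩
    exact ⟨v i, hv i⟩
  let e := LinearEquiv.ofBijective Φ ⟨hΦ, hsurj⟩
  refine ⟨c.map e.symm, fun i => ?_⟩
  rw [Module.Basis.map_apply, LinearEquiv.symm_apply_eq]
  exact (hv i).symm

namespace MvPolynomial

variable {R σ : Type*} [CommRing R]

theorem le_of_mem_support_prod {ι : Type*} {s : Finset ι} {f : ι → MvPolynomial σ R}
    {a : ι → σ →₀ ℕ} (hf : ∀ i ∈ s, ∀ q ∈ (f i).support, q ≤ a i) :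
    ∀ q ∈ (∏ i ∈ s, f i).support, q ≤ ∑ i ∈ s, a i := by
  classical
  induction s using Finset.induction_on with
  | empty =>
    intro q hq
    rw [prod_empty, mem_support_iff, coeff_one, ne_eq, ite_eq_right_iff, not_forall] at hq
    rw [sum_empty, ← hq.1]
  | insert i s hi ih =>
    intro q hq
    rw [prod_insert hi] at hq
    obtain ⟨a, ha, b, hb, rfl⟩ := Finset.mem_add.mp (support_mul _ _ hq)
    rw [sum_insert hi]
    exact add_le_add (hf i (mem_insert_self i s) a ha)
      (ih (fun j hj => hf j (mem_insert_of_mem hj)) b hb)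

theorem le_single_one_of_mem_support_X_sub_C {i : σ} {a : R} {q : σ →₀ ℕ}
    (hq : q ∈ (X i - C a).support) : q ≤ Finsupp.single i 1 := by
  classical
  rw [mem_support_iff, coeff_sub, coeff_X, coeff_C] at hq
  by_cases h₁ : Finsupp.single i 1 = q
  · exact h₁.ge
  by_cases h₀ : 0 = q
  · exact h₀ ▸ zero_le
  simp [h₁, h₀] at hq

noncomputable def newtonMonomial (η : ℕ → R) (β : σ →₀ ℕ) : MvPolynomial σ R :=
  β.prod fun i k => ∏ j ∈ range k, (X i - C (η j))

theorem le_of_mem_support_newtonMonomial (η : ℕ → R) {β q : σ →₀ ℕ}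
    (hq : q ∈ (newtonMonomial η β).support) : q ≤ β := by
  have hfactor (i : σ) (k : ℕ) :
        ∀ q ∈ (∏ j ∈ range k, (X i - C (η j)) : MvPolynomial σ R).support,
        q ≤ Finsupp.single i k := by
    intro q hq
    have := le_of_mem_support_prod (fun j _ _ => le_single_one_of_mem_support_X_sub_C) q hq
    rwa [sum_const, card_range, Finsupp.smul_single, smul_eq_mul, mul_one] at this
  have := le_of_mem_support_prod (fun i _ => hfactor i (β i)) q hq
  rwa [← Finsupp.sum, Finsupp.sum_single] at this

theorem eval_newtonMonomial (η : ℕ → R) (β : σ →₀ ℕ) (x : σ → R) :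
    eval x (newtonMonomial η β) = β.prod fun i k => ∏ j ∈ range k, (x i - η j) := by
  simp [newtonMonomial, Finsupp.prod, map_prod]

theorem eval_newtonMonomial_eq_zero_of_not_le (η : ℕ → R) {α β : σ →₀ ℕ} (h : ¬β ≤ α) :
    eval (fun i => η (α i)) (newtonMonomial η β) = 0 := by
  simp only [Finsupp.le_iff, not_forall, not_le] at h
  obtain ⟨i, hi, hlt⟩ := h
  rw [eval_newtonMonomial]
  exact prod_eq_zero hi (prod_eq_zero (mem_range.mpr hlt) (sub_self _))

theorem eval_newtonMonomial_self_ne_zero [IsDomain R] {η : ℕ → R} {r : ℕ}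
    (hη : Set.InjOn η (Set.Iio r)) {β : σ →₀ ℕ} (hβ : ∀ i, β i < r) :
    eval (fun i => η (β i)) (newtonMonomial η β) ≠ 0 := by
  rw [eval_newtonMonomial]
  refine prod_ne_zero_iff.mpr fun i _ => prod_ne_zero_iff.mpr fun j hj => sub_ne_zero.mpr ?_
  have hj : j < β i := mem_range.mp hj
  exact fun h => hj.ne' (hη (hβ i) (hj.trans (hβ i)) h)

theorem monomialEvalMatrix_mul_coeffMatrix [Fintype σ] {ι κ : Type*} (δ : Finset (σ →₀ ℕ))
    (x : ι → σ → R) {g : κ → MvPolynomial σ R} (hg : ∀ k, (g k).support ⊆ δ) :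
    Matrix.of (fun (p : ι) (q : δ) => ∏ i, x p i ^ (q : σ →₀ ℕ) i) *
        Matrix.of (fun (q : δ) k => coeff (q : σ →₀ ℕ) (g k)) =
      Matrix.of fun p k => eval (x p) (g k) := by
  ext p k
  rw [Matrix.mul_apply, Matrix.of_apply, eval_eq', sum_subset (hg k) fun q _ hq => by
    rw [notMem_support_iff.mp hq, zero_mul], ← sum_coe_sort δ]
  exact sum_congr rfl fun q _ => mul_comm _ _

theorem det_monomialEvalMatrix_ne_zero [Fintype σ] [DecidableEq σ] [IsDomain R]
    {δ : Finset (σ →₀ ℕ)}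
    (hδ : IsLowerSet (δ : Set (σ →₀ ℕ))) {r : ℕ} (hbound : ∀ α ∈ δ, ∀ i, α i < r)
    {η : ℕ → R} (hη : Set.InjOn η (Set.Iio r)) :
    (Matrix.of fun p q : δ => ∏ i, η ((p : σ →₀ ℕ) i) ^ ((q : σ →₀ ℕ) i)).det ≠ 0 := by
  have hmul := monomialEvalMatrix_mul_coeffMatrix δ (fun (α : δ) i => η ((α : σ →₀ ℕ) i))
    (g := fun β : δ => newtonMonomial η β)
    (fun β _ hq => hδ (le_of_mem_support_newtonMonomial η hq) β.2)
  have hnewton : (Matrix.of fun α β : δ =>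
      eval (fun i => η ((α : σ →₀ ℕ) i)) (newtonMonomial η β)).det ≠ 0 := by
    rw [Matrix.det_eq_prod_diag_of_le_of_ne_zero]
    · exact prod_ne_zero_iff.mpr fun β _ => eval_newtonMonomial_self_ne_zero hη (hbound β β.2)
    · intro α β h
      by_contra hle
      exact h (eval_newtonMonomial_eq_zero_of_not_le η hle)
  intro h
  apply hnewton
  rw [← hmul, Matrix.det_mul, h, zero_mul]

theorem exists_injective_quotient_eval {ι : Type*} (x : ι → σ → R)
    {I : Ideal (MvPolynomial σ R)} (hI : ∀ f, f ∈ I ↔ ∀ i, eval (x i) f = 0) :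
    ∃ Φ : (MvPolynomial σ R ⧸ I) →ₗ[R] (ι → R),
      Function.Injective Φ ∧ ∀ f, Φ (Ideal.Quotient.mk I f) = fun i => eval (x i) f := by
  let ev : MvPolynomial σ R →ₐ[R] (ι → R) := AlgHom.pi fun i => aeval (x i)
  have hev (f : MvPolynomial σ R) : ev f = fun i => eval (x i) f := by
    funext i
    simp only [ev, AlgHom.pi_apply, aeval_eq_eval]
  have hker (f) (hf : f ∈ I) : ev f = 0 := by
    rw [hev]
    funext i
    exact (hI f).mp hf i
  let Φ := (Ideal.Quotient.liftₐ I ev hker).toLinearMap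
  have hΦ (f) : Φ (Ideal.Quotient.mk I f) = fun i => eval (x i) f := hev f
  refine ⟨Φ, (injective_iff_map_eq_zero Φ).mpr fun a ha => ?_, hΦ⟩
  obtain ⟨f, rfl⟩ := Ideal.Quotient.mk_surjective a
  rw [hΦ] at ha
  rw [Ideal.Quotient.eq_zero_iff_mem, hI]
  exact congrFun ha

end MvPolynomial

open MvPolynomial

theorem stmt18_general {F : Type*} [Field F] {n r : ℕ}
    (δ : Finset (Fin n →₀ ℕ))
    (hstd : ∀ α ∉ δ, ∀ γ : Fin n →₀ ℕ, α + γ ∉ δ)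
    (hbound : ∀ α ∈ δ, ∀ i : Fin n, (α : Fin n →₀ ℕ) i < r)
    (η : ℕ → F) (hη : Set.InjOn η (Set.Iio r))
    (I : Ideal (MvPolynomial (Fin n) F))
    (hI : ∀ f : MvPolynomial (Fin n) F,
      f ∈ I ↔ ∀ α ∈ δ, MvPolynomial.eval (fun i => η ((α : Fin n →₀ ℕ) i)) f = 0) :
    (∃ b : Module.Basis ↥δ F (MvPolynomial (Fin n) F ⧸ I),
      ∀ β : ↥δ, b β = Ideal.Quotient.mk I (MvPolynomial.monomial (β : Fin n →₀ ℕ) 1)) ∧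
    Matrix.det (Matrix.of fun p q : ↥δ =>
      ∏ i : Fin n, η ((p : Fin n →₀ ℕ) i) ^ ((q : Fin n →₀ ℕ) i)) ≠ 0 := by
  have hdet := det_monomialEvalMatrix_ne_zero (isLowerSet_of_forall_add_notMem hstd) hbound hη
  refine ⟨?_, hdet⟩
  obtain ⟨Φ, hΦ, hΦmk⟩ := exists_injective_quotient_eval
    (fun (α : δ) i => η ((α : Fin n →₀ ℕ) i)) (I := I)
    fun f => (hI f).trans ⟨fun h α => h α α.2, fun h α hα => h ⟨α, hα⟩⟩
  have hcols := Matrix.linearIndependent_cols_of_isUnit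
    ((Matrix.isUnit_iff_isUnit_det _).mpr hdet.isUnit)
  let c := basisOfLinearIndependentOfCardEqFinrank' _ hcols
    (Module.finrank_fintype_fun_eq_card F).symm
  refine exists_basis_of_injective_of_comp_eq hΦ c fun β => ?_
  rw [hΦmk, coe_basisOfLinearIndependentOfCardEqFinrank']
  ext α
  simp only [eval_monomial, Finsupp.prod_pow, one_mul, Matrix.col_apply, Matrix.of_apply]

theorem stmt18 {F : Type*} [Field F] {n r : ℕ}
    (δ : Finset (Fin n →₀ ℕ))
    (hstd : ∀ α ∉ δ, ∀ γ : Fin n →₀ ℕ, α + γ ∉ δ)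
    (hcard : δ.card = r)
    (hbound : ∀ α ∈ δ, ∀ i : Fin n, (α : Fin n →₀ ℕ) i < r)
    (η : ℕ → F) (hη : Set.InjOn η (Set.Iio r))
    (I : Ideal (MvPolynomial (Fin n) F))
    (hI : ∀ f : MvPolynomial (Fin n) F,
      f ∈ I ↔ ∀ α ∈ δ, MvPolynomial.eval (fun i => η ((α : Fin n →₀ ℕ) i)) f = 0) :
    (∃ b : Module.Basis ↥δ F (MvPolynomial (Fin n) F ⧸ I),
      ∀ β : ↥δ, b β = Ideal.Quotient.mk I (MvPolynomial.monomial (β : Fin n →₀ ℕ) 1)) ∧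
    Matrix.det (Matrix.of fun p q : ↥δ =>
      ∏ i : Fin n, η ((p : Fin n →₀ ℕ) i) ^ ((q : Fin n →₀ ℕ) i)) ≠ 0 :=
  stmt18_general δ hstd hbound η hη I hI
end

section
/- For the standard set δ = {0, e_1, 2e_1, …, (r−1)e_1} ⊆ ℕ^2 and a commutative ring B, giving a B-algebra structure on the free module Bx^δ together with a surjection φ : B[x_1,x_2] → Bx^δ with φ(x^β) = x^β for β ∈ δ is equivalent to freely choosing the 2r coefficients a_{(r,0),β} and a_{(0,1),β} (β ∈ δ): the structural equations determine all other a_{α,β} and impose no further constraints. Hence the border basis scheme Hilb^δ is isomorphic to affine space 𝔸^{2r}. -/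
/-!
The structural equations say that the row `a (α + eᵢ)` is the row `a α` times the matrix of
border rows `a (γ + eᵢ)`, `γ ∈ δ`; so `a` is determined by `a 0` and the border rows. For the
standard set `δ = {k e₁ | k < r}` the border rows are unit vectors, the row `w = a (r e₁)`, and
the rows `a (k e₁ + e₂)`, which the same recursion determines from `w` and `v = a e₂`.

Conversely, given `w` and `v`, the ring `A = B[t] ⧸ (tʳ - ∑ₖ wₖ tᵏ)` is free with basis
`1, t, …, tʳ⁻¹`. Sending `x₁ ↦ t`, `x₂ ↦ ∑ₖ vₖ tᵏ` and taking coordinates of the images of the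
monomials gives a solution: its structural equations are multiplication by `xᵢ` in coordinates.
-/

namespace BorderBasis

variable {σ B : Type*} [CommRing B]

def StructuralEquations (δ : Finset (σ →₀ ℕ)) (a : (σ →₀ ℕ) → δ → B) : Prop :=
  ∀ (α : σ →₀ ℕ) (i : σ) (β : δ),
    a (α + Finsupp.single i 1) β = ∑ γ : δ, a α γ * a ((γ : σ →₀ ℕ) + Finsupp.single i 1) β

namespace StructuralEquations

variable {δ : Finset (σ →₀ ℕ)} {a a' : (σ →₀ ℕ) → δ → B}

theorem eq_add_single_of_eq (ha : StructuralEquations δ a) (ha' : StructuralEquations δ a')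
    {α : σ →₀ ℕ} {i : σ} (hα : a α = a' α)
    (hborder : ∀ γ : δ,
      a ((γ : σ →₀ ℕ) + Finsupp.single i 1) = a' ((γ : σ →₀ ℕ) + Finsupp.single i 1)) :
    a (α + Finsupp.single i 1) = a' (α + Finsupp.single i 1) := by
  funext β
  simp only [ha α i β, ha' α i β, hα, hborder]

theorem ext_of_border (ha : StructuralEquations δ a) (ha' : StructuralEquations δ a')
    (h₀ : a 0 = a' 0)
    (hborder : ∀ (γ : δ) (i : σ),
      a ((γ : σ →₀ ℕ) + Finsupp.single i 1) = a' ((γ : σ →₀ ℕ) + Finsupp.single i 1)) :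
    a = a' := by
  have add_single : ∀ α i n, a α = a' α →
      a (α + Finsupp.single i n) = a' (α + Finsupp.single i n) := by
    intro α i n hα
    induction n with
    | zero => simpa using hα
    | succ n ih =>
      rw [Finsupp.single_add, ← add_assoc]
      exact ha.eq_add_single_of_eq ha' ih (hborder · i)
  funext α
  induction α using Finsupp.induction₂ with
  | zero => exact h₀
  | add_single i n α _ _ ih => exact add_single α i n ih

end StructuralEquations

section Algebra

variable {A : Type*} [CommRing A] [Algebra B A] {δ : Finset (σ →₀ ℕ)} (x : σ → A)
  (b : Module.Basis δ B A)

theorem prod_pow_add_single (α : σ →₀ ℕ) (i : σ) :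
    (α + Finsupp.single i 1).prod (fun j k => x j ^ k) = α.prod (fun j k => x j ^ k) * x i := by
  rw [Finsupp.prod_add_index' (fun _ => pow_zero _) (fun _ => pow_add _),
    Finsupp.prod_single_index (h := fun j k => x j ^ k) (pow_zero (x i)), pow_one]

theorem structuralEquations_repr_prod_pow
    (hb : ∀ γ : δ, b γ = (γ : σ →₀ ℕ).prod (fun j k => x j ^ k)) :
    StructuralEquations δ fun α => ⇑(b.repr (α.prod fun j k => x j ^ k)) := by
  intro α i β
  change b.repr ((α + Finsupp.single i 1).prod fun j k => x j ^ k) β = _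
  rw [prod_pow_add_single, ← b.sum_repr (α.prod fun j k => x j ^ k)]
  simp only [Finset.sum_mul, smul_mul_assoc, hb, ← prod_pow_add_single, map_sum, map_smul,
    Finsupp.coe_finsetSum, Finset.sum_apply, Finsupp.coe_smul, Pi.smul_apply, smul_eq_mul]

theorem repr_prod_pow_self [DecidableEq σ]
    (hb : ∀ γ : δ, b γ = (γ : σ →₀ ℕ).prod (fun j k => x j ^ k)) (α β : δ) :
    b.repr ((α : σ →₀ ℕ).prod fun j k => x j ^ k) β = if β = α then 1 else 0 := by
  rw [← hb, b.repr_self, Finsupp.single_eq_pi_single, Pi.single_apply]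

end Algebra

section RecurrencePoly

open Polynomial

variable {n : ℕ} (c : Fin n → B)

noncomputable def recurrencePoly : B[X] := X ^ n - ∑ k : Fin n, C (c k) * X ^ (k : ℕ)

theorem recurrencePoly_monic : (recurrencePoly c).Monic :=
  monic_X_pow_sub (degree_sum_fin_lt c)

theorem natDegree_recurrencePoly [Nontrivial B] : (recurrencePoly c).natDegree = n := by
  have hlt : degree (∑ k : Fin n, C (c k) * X ^ (k : ℕ)) < degree (X ^ n : B[X]) := by
    rw [degree_X_pow]
    exact degree_sum_fin_lt c
  exact natDegree_eq_of_degree_eq_some (by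
    rw [recurrencePoly, degree_sub_eq_left_of_degree_lt hlt, degree_X_pow])

theorem root_recurrencePoly_pow :
    AdjoinRoot.root (recurrencePoly c) ^ n =
      ∑ k : Fin n, c k • AdjoinRoot.root (recurrencePoly c) ^ (k : ℕ) := by
  have h : aeval (AdjoinRoot.root (recurrencePoly c))
      (X ^ n - ∑ k : Fin n, C (c k) * X ^ (k : ℕ)) = 0 :=
    (AdjoinRoot.aeval_eq _).trans AdjoinRoot.mk_self
  simpa [sub_eq_zero, Algebra.smul_def] using h

noncomputable def rootPowBasis [Nontrivial B] :
    Module.Basis (Fin n) B (AdjoinRoot (recurrencePoly c)) :=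
  (AdjoinRoot.powerBasis' (recurrencePoly_monic c)).basis.reindex
    (finCongr (natDegree_recurrencePoly c))

theorem rootPowBasis_apply [Nontrivial B] (k : Fin n) :
    rootPowBasis c k = AdjoinRoot.root (recurrencePoly c) ^ (k : ℕ) := by
  rw [rootPowBasis, Module.Basis.reindex_apply, PowerBasis.coe_basis, AdjoinRoot.powerBasis'_gen]
  rfl

end RecurrencePoly

section StandardSet

variable {r : ℕ} {δ : Finset (Fin 2 →₀ ℕ)}
  (hδ : ∀ α : Fin 2 →₀ ℕ, α ∈ δ ↔ ∃ k < r, α = Finsupp.single (0 : Fin 2) k)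
include hδ

theorem single_zero_mem {k : ℕ} (hk : k < r) : Finsupp.single 0 k ∈ δ :=
  (hδ _).2 ⟨k, hk, rfl⟩

theorem eq_of_eq_at_generators {a a' : (Fin 2 →₀ ℕ) → δ → B}
    (hid : ∀ α β : δ, a α β = if β = α then 1 else 0)
    (hid' : ∀ α β : δ, a' α β = if β = α then 1 else 0)
    (ha : StructuralEquations δ a) (ha' : StructuralEquations δ a')
    (hw : a (Finsupp.single 0 r) = a' (Finsupp.single 0 r))
    (hv : a (Finsupp.single 1 1) = a' (Finsupp.single 1 1)) : a = a' := by
  have h_mem : ∀ γ : δ, a γ = a' γ := fun γ => funext fun β => by rw [hid, hid']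
  have h_border₀ : ∀ γ : δ, a ((γ : Fin 2 →₀ ℕ) + Finsupp.single 0 1) =
      a' ((γ : Fin 2 →₀ ℕ) + Finsupp.single 0 1) := by
    intro γ
    obtain ⟨k, hk, hγ⟩ := (hδ γ).1 γ.2
    rw [hγ, ← Finsupp.single_add]
    rcases (Nat.succ_le_of_lt hk).lt_or_eq with hlt | rfl
    · exact h_mem ⟨_, single_zero_mem hδ hlt⟩
    · exact hw
  have h_border₁ : ∀ k, a (Finsupp.single 0 k + Finsupp.single 1 1) =
      a' (Finsupp.single 0 k + Finsupp.single 1 1) := by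
    intro k
    induction k with
    | zero => simpa using hv
    | succ k ih =>
      rw [Finsupp.single_add, add_right_comm]
      exact ha.eq_add_single_of_eq ha' ih h_border₀
  refine ha.ext_of_border ha' ?_ fun γ i => ?_
  · funext β
    obtain ⟨k, hk, -⟩ := (hδ β).1 β.2
    exact congrFun (h_mem ⟨0, by simpa using single_zero_mem hδ (k.zero_le.trans_lt hk)⟩) β
  · obtain ⟨k, -, hγ⟩ := (hδ γ).1 γ.2
    fin_cases i
    · exact h_border₀ γ
    · rw [hγ]
      exact h_border₁ k

noncomputable def stdEquiv : Fin r ≃ δ :=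
  Equiv.ofBijective (fun k => ⟨Finsupp.single 0 k, single_zero_mem hδ k.2⟩)
    ⟨fun k l h => Fin.ext (Finsupp.single_injective 0 (congrArg Subtype.val h)),
      fun β => by
        obtain ⟨k, hk, hβ⟩ := (hδ β).1 β.2
        exact ⟨⟨k, hk⟩, Subtype.ext hβ.symm⟩⟩

theorem stdEquiv_symm_apply (β : δ) : ((stdEquiv hδ).symm β : ℕ) = (β : Fin 2 →₀ ℕ) 0 := by
  obtain ⟨k, rfl⟩ := (stdEquiv hδ).surjective β
  rw [Equiv.symm_apply_apply]
  exact Finsupp.single_eq_same.symm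

theorem exists_structuralEquations (w v : δ → B) :
    ∃ a : (Fin 2 →₀ ℕ) → δ → B, (∀ α β : δ, a α β = if β = α then 1 else 0) ∧
      StructuralEquations δ a ∧ a (Finsupp.single 0 r) = w ∧ a (Finsupp.single 1 1) = v := by
  -- Over the zero ring `recurrencePoly` has degree `0`, not `r`, so that case is split off.
  rcases subsingleton_or_nontrivial B with hB | hB
  · exact ⟨0, fun _ _ => Subsingleton.elim _ _, fun _ _ _ => Subsingleton.elim _ _,
      Subsingleton.elim _ _, Subsingleton.elim _ _⟩
  set c := w ∘ stdEquiv hδ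
  set b := (rootPowBasis c).reindex (stdEquiv hδ)
  set θ := AdjoinRoot.root (recurrencePoly c)
  have hb : ∀ β, b β = θ ^ (β : Fin 2 →₀ ℕ) 0 := by
    intro β
    rw [Module.Basis.reindex_apply, rootPowBasis_apply, stdEquiv_symm_apply]
  set x : Fin 2 → AdjoinRoot (recurrencePoly c) := ![θ, ∑ β, v β • b β]
  have hx : ∀ α : Fin 2 →₀ ℕ, α.prod (fun j k => x j ^ k) = θ ^ α 0 * x 1 ^ α 1 := by
    intro α
    rw [Finsupp.prod_pow, Fin.prod_univ_two]
    rfl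
  have hbx : ∀ γ : δ, b γ = (γ : Fin 2 →₀ ℕ).prod (fun j k => x j ^ k) := by
    intro γ
    obtain ⟨k, -, hγ⟩ := (hδ γ).1 γ.2
    rw [hx, hb, hγ]
    simp
  refine ⟨_, repr_prod_pow_self x b hbx, structuralEquations_repr_prod_pow x b hbx, ?_, ?_⟩
  · have hsum : ∑ k, c k • θ ^ (k : ℕ) = ∑ β, w β • b β := by
      rw [← (stdEquiv hδ).sum_comp]
      refine Finset.sum_congr rfl fun k _ => ?_
      rw [hb]
      exact congrArg _ (congrArg _ Finsupp.single_eq_same.symm)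
    simp only [hx, Finsupp.single_eq_same, Finsupp.single_eq_of_ne (by decide : (1 : Fin 2) ≠ 0),
      pow_zero, mul_one]
    rw [root_recurrencePoly_pow, hsum, b.repr_sum_self]
  · simp only [hx, Finsupp.single_eq_same, Finsupp.single_eq_of_ne (by decide : (0 : Fin 2) ≠ 1),
      pow_zero, one_mul, pow_one]
    exact b.repr_sum_self v

end StandardSet

end BorderBasis

theorem stmt19 {B : Type*} [CommRing B] (r : ℕ)
    (δ : Finset (Fin 2 →₀ ℕ))
    (hδ : ∀ α : Fin 2 →₀ ℕ, α ∈ δ ↔ ∃ k < r, α = Finsupp.single (0 : Fin 2) k) :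
    Function.Bijective
      (fun x : {a : (Fin 2 →₀ ℕ) → ↥δ → B //
          (∀ (α β : ↥δ), a (α : Fin 2 →₀ ℕ) β = if β = α then 1 else 0) ∧
          ∀ (α : Fin 2 →₀ ℕ) (i : Fin 2) (β : ↥δ),
            a (α + Finsupp.single i 1) β =
              ∑ γ : ↥δ, a α γ * a ((γ : Fin 2 →₀ ℕ) + Finsupp.single i 1) β} =>
        ((fun β => x.1 (Finsupp.single (0 : Fin 2) r) β,
          fun β => x.1 (Finsupp.single (1 : Fin 2) 1) β) : (↥δ → B) × (↥δ → B))) := by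
  constructor
  · rintro ⟨a, hid, ha⟩ ⟨a', hid', ha'⟩ h
    obtain ⟨hw, hv⟩ := Prod.mk.inj h
    exact Subtype.ext (BorderBasis.eq_of_eq_at_generators hδ hid hid' ha ha' hw hv)
  · rintro ⟨w, v⟩
    obtain ⟨a, hid, ha, hw, hv⟩ := BorderBasis.exists_structuralEquations hδ w v
    exact ⟨⟨a, hid, ha⟩, Prod.ext hw hv⟩
end
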